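/- Reduction to the leading term: over RCA_0, RT^{!α}_k implies RT^{!lead(α)}_k. Concretely, write α = lead(α) + α'. Given a coloring c of the lead(α)-size subsets of an infinite set X, define d on α-size subsets t of X by d(t) = c(s) where s is the unique lead(α)-size initial segment of t; then for any infinite homogeneous set H for d, with h the α'-size initial segment of H, the set H \ h is an infinite homogeneous set for c. -/

import Mathlib

open Ordinal

/-- `α[s]`: iterate the fundamental sequence `F` along the increasing enumeration of `s`. -/
def ordIter (F : Ordinal → ℕ → Ordinal) (α : Ordinal) (s : Finset ℕ) : Ordinal :=
  (s.sort (· ≤ ·)).foldl F α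

/-- `s` is `α`-large: `α[s] = 0`. -/
def IsLarge (F : Ordinal → ℕ → Ordinal) (α : Ordinal) (s : Finset ℕ) : Prop :=
  ordIter F α s = 0

/-- `s` is exactly `α`-large (`α`-size). -/
def IsSize (F : Ordinal → ℕ → Ordinal) (α : Ordinal) (s : Finset ℕ) : Prop :=
  IsLarge F α s ∧ ∀ h : s.Nonempty, ¬ IsLarge F α (s.erase (s.max' h))

/-- The system of fundamental sequences `F` is nested. -/
def Nested (F : Ordinal → ℕ → Ordinal) : Prop :=
  ∀ (γ β : Ordinal) (n : ℕ), 1 < n → γ < β → ¬ (F β n < γ ∧ F γ n < F β n)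

/-- `t` is an initial segment (prefix) of the finite set `s`. -/
def IsPrefixOf (t s : Finset ℕ) : Prop :=
  t ⊆ s ∧ ∀ x ∈ t, ∀ y ∈ s, y ≤ x → y ∈ t

/-- `h` is an initial segment of the set `H ⊆ ℕ`. -/
def IsPrefixOfSet (h : Finset ℕ) (H : Set ℕ) : Prop :=
  ↑h ⊆ H ∧ ∀ x ∈ h, ∀ y ∈ H, y ≤ x → y ∈ h

/-- `lead α`: the leading term of the Cantor normal form of `α`. -/
noncomputable def lead (α : Ordinal) : Ordinal :=
  Ordinal.omega0 ^ Ordinal.log Ordinal.omega0 α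

/-- `RT^{!α}_k`. -/
def RTsize (F : Ordinal → ℕ → Ordinal) (α : Ordinal) (k : ℕ) : Prop :=
  ∀ X : Set ℕ, X.Infinite → ∀ c : Finset ℕ → Fin k,
    ∃ H : Set ℕ, H ⊆ X ∧ H.Infinite ∧
      ∃ i : Fin k, ∀ s : Finset ℕ, ↑s ⊆ H → IsSize F α s → c s = i

/-! Initial segments of a fixed set are linearly ordered by inclusion, and every infinite set
has an exactly `β`-large initial segment: the iterates `β[x₀, …, xₙ]` descend in the ordinals
until they vanish. Given a `lead α`-size `t ⊆ H`, extend `t` by the elements of `H` above it and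
let `u` be the `α`-size initial segment of the result. If `u` were a proper part of `t`, the
`lead α`-size initial segment of `u` would make `t` minus its maximum `lead α`-large, against the
exactness of `t`; so `t` is the `lead α`-size initial segment of `u`, and `c t = d u`. Hence `c`
is homogeneous on all of `H`, in particular on `H \ h`. -/

theorem Finset.sort_insert_of_forall_lt {α : Type*} [LinearOrder α] {a : α} {s : Finset α}
    (ha : ∀ b ∈ s, b < a) :
    (insert a s).sort (· ≤ ·) = s.sort (· ≤ ·) ++ [a] := by
  have ha' : a ∉ s := fun h => (ha a h).false
  refine List.Perm.eq_of_pairwise' (Finset.pairwise_sort _ _) ?_ ?_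
  · rw [List.pairwise_append]
    refine ⟨Finset.pairwise_sort _ _, List.pairwise_singleton _ _, ?_⟩
    intro x hx y hy
    rw [List.mem_singleton.mp hy]
    exact (ha x ((Finset.mem_sort _).mp hx)).le
  · exact ((Finset.sort_perm_toList _ _).trans (Finset.toList_insert ha')).trans
      (((Finset.sort_perm_toList s _).symm.cons a).trans (List.perm_append_singleton _ _).symm)

section Largeness

variable {F : Ordinal → ℕ → Ordinal} {β γ : Ordinal}

theorem ordIter_insert_of_forall_lt {a : ℕ} {s : Finset ℕ} (ha : ∀ b ∈ s, b < a) :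
    ordIter F β (insert a s) = F (ordIter F β s) a := by
  rw [ordIter, Finset.sort_insert_of_forall_lt ha, List.foldl_append]
  rfl

theorem IsPrefixOf.trans {u v w : Finset ℕ} (huv : IsPrefixOf u v) (hvw : IsPrefixOf v w) :
    IsPrefixOf u w :=
  ⟨huv.1.trans hvw.1, fun x hx y hy hyx => huv.2 x hx y (hvw.2 x (huv.1 hx) y hy hyx) hyx⟩

theorem IsPrefixOf.subset_erase_max' {v t : Finset ℕ} (hvt : IsPrefixOf v t) (hne : v ≠ t)
    (ht : t.Nonempty) : IsPrefixOf v (t.erase (t.max' ht)) := by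
  have hmax : t.max' ht ∉ v := fun hm =>
    hne (hvt.1.antisymm fun y hy => hvt.2 _ hm y hy (t.le_max' y hy))
  exact ⟨Finset.subset_erase.mpr ⟨hvt.1, hmax⟩,
    fun x hx y hy hyx => hvt.2 x hx y (Finset.mem_of_mem_erase hy) hyx⟩

theorem IsLarge.of_isPrefixOf (h0 : ∀ n, F 0 n = 0) {v w : Finset ℕ} (hvw : IsPrefixOf v w)
    (hv : IsLarge F β v) : IsLarge F β w := by
  induction w using Finset.induction_on_max with
  | empty => rwa [Finset.subset_empty.mp hvw.1] at hv
  | insert a s ha ih =>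
    by_cases hav : a ∈ v
    · have hsv : insert a s ⊆ v := fun y hy =>
        hvw.2 a hav y hy ((Finset.mem_insert.mp hy).elim le_of_eq fun h => (ha y h).le)
      rwa [hvw.1.antisymm hsv] at hv
    · have hvs : IsPrefixOf v s :=
        ⟨fun x hx => (Finset.mem_insert.mp (hvw.1 hx)).resolve_left (ne_of_mem_of_not_mem hx hav),
          fun x hx y hy hyx => hvw.2 x hx y (Finset.mem_insert_of_mem hy) hyx⟩
      rw [IsLarge, ordIter_insert_of_forall_lt ha, ih hvs, h0]

theorem IsSize.eq_of_isPrefixOf (h0 : ∀ n, F 0 n = 0) {v t : Finset ℕ} (ht : IsSize F β t)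
    (hvt : IsPrefixOf v t) (hv : IsLarge F β v) : v = t := by
  by_contra hne
  obtain rfl | htne := t.eq_empty_or_nonempty
  · exact hne (Finset.subset_empty.mp hvt.1)
  · exact ht.2 htne (hv.of_isPrefixOf h0 (hvt.subset_erase_max' hne htne))

theorem isSize_insert_of_forall_lt {a : ℕ} {s : Finset ℕ} (ha : ∀ b ∈ s, b < a)
    (hlarge : IsLarge F β (insert a s)) (hs : ¬ IsLarge F β s) : IsSize F β (insert a s) := by
  refine ⟨hlarge, fun hne => ?_⟩
  have hmax : (insert a s).max' hne = a :=
    le_antisymm (Finset.max'_le _ _ _ fun y hy =>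
      (Finset.mem_insert.mp hy).elim le_of_eq fun h => (ha y h).le)
      (Finset.le_max' _ _ (Finset.mem_insert_self a s))
  rwa [hmax, Finset.erase_insert fun h => (ha a h).false]

theorem exists_isSize_image_range (hself : ∀ δ n, δ ≠ 0 → F δ n < δ) (β : Ordinal)
    {f : ℕ → ℕ} (hf : StrictMono f) : ∃ N, IsSize F β ((Finset.range N).image f) := by
  classical
  set u : ℕ → Finset ℕ := fun n => (Finset.range n).image f
  have hlt : ∀ n, ∀ b ∈ u n, b < f n := by
    intro n b hb
    obtain ⟨i, hi, rfl⟩ := Finset.mem_image.mp hb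
    exact hf (Finset.mem_range.mp hi)
  have hsucc : ∀ n, u (n + 1) = insert (f n) (u n) := fun n => by
    simp only [u, Finset.range_add_one, Finset.image_insert]
  have hiter : ∀ n, ordIter F β (u (n + 1)) = F (ordIter F β (u n)) (f n) := fun n => by
    rw [hsucc, ordIter_insert_of_forall_lt (hlt n)]
  have hex : ∃ n, IsLarge F β (u n) := by
    obtain ⟨n, hn⟩ :=
      WellFounded.not_rel_apply_succ (r := (· < ·)) fun n => ordIter F β (u n)
    exact ⟨n, by_contra fun h => hn (hiter n ▸ hself _ _ h)⟩
  refine ⟨Nat.find hex, ?_⟩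
  have hlarge : IsLarge F β (u (Nat.find hex)) := Nat.find_spec hex
  rcases hN : Nat.find hex with _ | M
  · exact ⟨hN ▸ hlarge, fun hne => by simp at hne⟩
  · rw [hN, hsucc] at hlarge
    have hM : ¬ IsLarge F β (u M) := Nat.find_min hex (hN ▸ M.lt_succ_self)
    simpa only [u, hsucc] using isSize_insert_of_forall_lt (hlt M) hlarge hM

theorem IsPrefixOfSet.subset_total {u t : Finset ℕ} {S : Set ℕ} (hu : IsPrefixOfSet u S)
    (ht : IsPrefixOfSet t S) : u ⊆ t ∨ t ⊆ u := by
  by_contra! h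
  obtain ⟨x, hxu, hxt⟩ := Finset.not_subset.mp h.1
  obtain ⟨y, hyt, hyu⟩ := Finset.not_subset.mp h.2
  rcases le_total x y with hxy | hyx
  · exact hxt (ht.2 y hyt x (hu.1 hxu) hxy)
  · exact hyu (hu.2 x hxu y (ht.1 hyt) hyx)

theorem IsPrefixOfSet.isPrefixOf {t u : Finset ℕ} {S : Set ℕ} (ht : IsPrefixOfSet t S)
    (hu : IsPrefixOfSet u S) (htu : t ⊆ u) : IsPrefixOf t u :=
  ⟨htu, fun x hx y hy hyx => ht.2 x hx y (hu.1 hy) hyx⟩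

theorem isPrefixOfSet_image_range_nth {S : Set ℕ} (hS : S.Infinite) (n : ℕ) :
    IsPrefixOfSet ((Finset.range n).image (Nat.nth (· ∈ S))) S := by
  classical
  refine ⟨fun x hx => ?_, fun x hx y hy hyx => ?_⟩
  · obtain ⟨i, -, rfl⟩ := Finset.mem_image.mp hx
    exact Nat.nth_mem_of_infinite hS i
  · obtain ⟨i, hi, rfl⟩ := Finset.mem_image.mp hx
    have hcount : Nat.nth (· ∈ S) (Nat.count (· ∈ S) y) = y := Nat.nth_count hy
    rw [← hcount, Nat.nth_le_nth (p := (· ∈ S)) hS] at hyx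
    exact Finset.mem_image.mpr
      ⟨_, Finset.mem_range.mpr (hyx.trans_lt (Finset.mem_range.mp hi)), hcount⟩

theorem exists_isPrefixOfSet_isSize (hself : ∀ δ n, δ ≠ 0 → F δ n < δ) (β : Ordinal)
    {S : Set ℕ} (hS : S.Infinite) : ∃ u, IsPrefixOfSet u S ∧ IsSize F β u := by
  obtain ⟨N, hN⟩ := exists_isSize_image_range hself β (Nat.nth_strictMono hS)
  exact ⟨_, isPrefixOfSet_image_range_nth hS N, hN⟩

theorem exists_infinite_isPrefixOfSet {t : Finset ℕ} {H : Set ℕ} (hH : H.Infinite)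
    (htH : ↑t ⊆ H) : ∃ S ⊆ H, S.Infinite ∧ IsPrefixOfSet t S := by
  refine ⟨↑t ∪ H \ Set.Iic (t.sup id), Set.union_subset htH Set.sdiff_subset,
    (hH.sdiff (Set.finite_Iic _)).mono Set.subset_union_right,
    Set.subset_union_left, fun x hx y hy hyx => hy.resolve_right fun hy' => hy'.2 ?_⟩
  exact hyx.trans (Finset.le_sup (f := id) hx)

theorem exists_isSize_of_isPrefixOf (h0 : ∀ n, F 0 n = 0)
    (hself : ∀ δ n, δ ≠ 0 → F δ n < δ)
    (hpref : ∀ s, IsSize F β s → ∃ v, IsPrefixOf v s ∧ IsLarge F γ v)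
    {H : Set ℕ} (hH : H.Infinite) {t : Finset ℕ} (htH : ↑t ⊆ H) (ht : IsSize F γ t) :
    ∃ s : Finset ℕ, ↑s ⊆ H ∧ IsSize F β s ∧ IsPrefixOf t s := by
  obtain ⟨S, hSH, hS, htS⟩ := exists_infinite_isPrefixOfSet hH htH
  obtain ⟨u, huS, hu⟩ := exists_isPrefixOfSet_isSize hself β hS
  refine ⟨u, huS.1.trans hSH, hu, htS.isPrefixOf huS ?_⟩
  rcases huS.subset_total htS with hut | htu
  · obtain ⟨v, hvu, hv⟩ := hpref u hu
    rw [← ht.eq_of_isPrefixOf h0 (hvu.trans (huS.isPrefixOf htS hut)) hv]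
    exact hvu.1
  · exact htu

theorem homogeneous_of_prefix_coloring {ι : Type*} (h0 : ∀ n, F 0 n = 0)
    (hself : ∀ δ n, δ ≠ 0 → F δ n < δ)
    (hpref : ∀ s, IsSize F β s → ∃ v, IsPrefixOf v s ∧ IsLarge F γ v)
    {c d : Finset ℕ → ι} {H : Set ℕ} (hH : H.Infinite)
    (hcd : ∀ s : Finset ℕ, ↑s ⊆ H → IsSize F β s →
      ∀ t, IsPrefixOf t s → IsSize F γ t → d s = c t)
    {i : ι} (hd : ∀ s : Finset ℕ, ↑s ⊆ H → IsSize F β s → d s = i)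
    {t : Finset ℕ} (htH : ↑t ⊆ H) (ht : IsSize F γ t) : c t = i := by
  obtain ⟨s, hsH, hs, hts⟩ := exists_isSize_of_isPrefixOf h0 hself hpref hH htH ht
  rw [← hcd s hsH hs t hts ht, hd s hsH hs]

end Largeness

theorem rt_lead_reduction_general
    (F : Ordinal → ℕ → Ordinal)
    (h0 : ∀ n : ℕ, F 0 n = 0)
    (hself : ∀ (α : Ordinal) (n : ℕ), α ≠ 0 → F α n < α)
    (α α' : Ordinal)
    (hpref : ∀ s : Finset ℕ, IsSize F α s →
      ∃! t : Finset ℕ, IsPrefixOf t s ∧ IsSize F (lead α) t)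
    (k : ℕ) :
    (RTsize F α k → RTsize F (lead α) k) ∧
    (∀ X : Set ℕ, X.Infinite → ∀ c d : Finset ℕ → Fin k,
      (∀ s : Finset ℕ, ↑s ⊆ X → IsSize F α s →
        ∀ t : Finset ℕ, IsPrefixOf t s → IsSize F (lead α) t → d s = c t) →
      ∀ H : Set ℕ, H ⊆ X → H.Infinite →
        (∃ i : Fin k, ∀ s : Finset ℕ, ↑s ⊆ H → IsSize F α s → d s = i) →
        ∀ h : Finset ℕ, IsPrefixOfSet h H → IsSize F α' h →
          (H \ ↑h).Infinite ∧
          ∃ i : Fin k, ∀ t : Finset ℕ, ↑t ⊆ H \ ↑h → IsSize F (lead α) t → c t = i) := by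
  have hpref' : ∀ s, IsSize F α s → ∃ v, IsPrefixOf v s ∧ IsLarge F (lead α) v :=
    fun s hs => (hpref s hs).exists.imp fun v hv => ⟨hv.1, hv.2.1⟩
  refine ⟨fun hRT X hX c => ?_, fun X _ c d hcd H hHX hH ⟨i, hd⟩ h _ _ => ?_⟩
  · classical
    let d s := if hs : IsSize F α s then c (hpref s hs).choose else c s
    have hcd : ∀ s, IsSize F α s → ∀ t, IsPrefixOf t s → IsSize F (lead α) t → d s = c t := by
      intro s hs t hts ht
      simp only [d, dif_pos hs, (hpref s hs).unique (hpref s hs).choose_spec.1 ⟨hts, ht⟩]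
    obtain ⟨H, hHX, hH, i, hd⟩ := hRT X hX d
    exact ⟨H, hHX, hH, i, fun t htH ht => homogeneous_of_prefix_coloring h0 hself hpref' hH
      (fun s _ => hcd s) hd htH ht⟩
  · exact ⟨hH.sdiff h.finite_toSet, i, fun t ht => homogeneous_of_prefix_coloring h0 hself
      hpref' hH (fun s hs => hcd s (hs.trans hHX)) hd (ht.trans Set.sdiff_subset)⟩

/-- Reduction to the leading term: `RT^{!α}_k` implies `RT^{!lead(α)}_k`; concretely,
writing `α = lead(α) + α'`, for any coloring `c` of the `lead(α)`-size subsets of an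
infinite `X` and any coloring `d` of `α`-size sets agreeing with `c` on unique
`lead(α)`-size initial segments, if `H` is an infinite homogeneous set for `d` and `h`
is the `α'`-size initial segment of `H`, then `H \ h` is an infinite homogeneous set
for `c`. -/
theorem rt_lead_reduction
    (F : Ordinal → ℕ → Ordinal)
    (h0 : ∀ n : ℕ, F 0 n = 0)
    (hsucc : ∀ (α : Ordinal) (n : ℕ), F (α + 1) n = α)
    (hself : ∀ (α : Ordinal) (n : ℕ), α ≠ 0 → F α n < α)
    (hnested : Nested F)
    (α α' : Ordinal) (hdec : α = lead α + α')
    (hpref : ∀ s : Finset ℕ, IsSize F α s →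
      ∃! t : Finset ℕ, IsPrefixOf t s ∧ IsSize F (lead α) t)
    (k : ℕ) (hk : 1 ≤ k) :
    (RTsize F α k → RTsize F (lead α) k) ∧
    (∀ X : Set ℕ, X.Infinite → ∀ c d : Finset ℕ → Fin k,
      (∀ s : Finset ℕ, ↑s ⊆ X → IsSize F α s →
        ∀ t : Finset ℕ, IsPrefixOf t s → IsSize F (lead α) t → d s = c t) →
      ∀ H : Set ℕ, H ⊆ X → H.Infinite →
        (∃ i : Fin k, ∀ s : Finset ℕ, ↑s ⊆ H → IsSize F α s → d s = i) →
        ∀ h : Finset ℕ, IsPrefixOfSet h H → IsSize F α' h →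
          (H \ ↑h).Infinite ∧
          ∃ i : Fin k, ∀ t : Finset ℕ, ↑t ⊆ H \ ↑h → IsSize F (lead α) t → c t = i) :=
  rt_lead_reduction_general F h0 hself α α' hpref k
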